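/- The third-order RadauIIA method is A-stable: for every z ∈ ℂ with Re(z) ≤ 0 one has 1 − 2z/3 + z²/6 ≠ 0 and |(1 + z/3)/(1 − 2z/3 + z²/6)| ≤ 1. -/

import Mathlib

/-!
Writing `R = N / D` with `N z = 1 + z/3` and `D z = 1 - 2z/3 + z²/6`, a direct computation gives
`36 (|D z|² - |N z|²) = |z|⁴ - 8 x |z|² + 24 x² - 72 x` for `x = Re z`, and every term on the right
is nonnegative when `x ≤ 0`. Hence `|N| ≤ |D|` on the closed left half-plane; since the only zero
`z = -3` of `N` is not a zero of `D`, the denominator cannot vanish there either.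
-/

open Complex

theorem ne_zero_and_norm_div_le_one_of_norm_le {K : Type*} [NormedDivisionRing K] {a b : K}
    (hab : ‖a‖ ≤ ‖b‖) (h : a = 0 → b ≠ 0) : b ≠ 0 ∧ ‖a / b‖ ≤ 1 := by
  have hb : b ≠ 0 := by
    intro hb0
    rw [hb0, norm_zero, norm_le_zero_iff] at hab
    exact h hab hb0
  exact ⟨hb, by rw [norm_div]; exact div_le_one_of_le₀ hab (norm_nonneg b)⟩

theorem radauIIA_normSq_den_sub_normSq_num (z : ℂ) :
    36 * (normSq (1 - 2 * z / 3 + z ^ 2 / 6) - normSq (1 + z / 3)) =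
      normSq z ^ 2 - 8 * z.re * normSq z + 24 * z.re ^ 2 - 72 * z.re := by
  simp only [pow_two, normSq_apply, add_re, sub_re, one_re, div_ofNat_re, mul_re, re_ofNat,
    im_ofNat, zero_mul, sub_zero, add_im, sub_im, one_im, div_ofNat_im, mul_im, add_zero, zero_sub,
    zero_add]
  ring

theorem radauIIA_norm_num_le_norm_den {z : ℂ} (hz : z.re ≤ 0) :
    ‖1 + z / 3‖ ≤ ‖1 - 2 * z / 3 + z ^ 2 / 6‖ := by
  have hdiff := radauIIA_normSq_den_sub_normSq_num z
  have hpos : 0 ≤ normSq z ^ 2 - 8 * z.re * normSq z + 24 * z.re ^ 2 - 72 * z.re := by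
    nlinarith [normSq_nonneg z, sq_nonneg z.re, mul_nonneg (neg_nonneg.mpr hz) (normSq_nonneg z)]
  rw [normSq_eq_norm_sq, normSq_eq_norm_sq] at hdiff
  exact le_of_sq_le_sq (by linarith) (norm_nonneg _)

theorem radauIIA_den_ne_zero_of_num_eq_zero {z : ℂ} (hz : 1 + z / 3 = 0) :
    1 - 2 * z / 3 + z ^ 2 / 6 ≠ 0 := by
  obtain rfl : z = -3 := by linear_combination 3 * hz
  norm_num

/-- The third-order RadauIIA method is A-stable. -/
theorem radauIIA_A_stable (z : ℂ) (hz : z.re ≤ 0) :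
    1 - 2 * z / 3 + z ^ 2 / 6 ≠ 0 ∧
      ‖(1 + z / 3) / (1 - 2 * z / 3 + z ^ 2 / 6)‖ ≤ 1 :=
  ne_zero_and_norm_div_le_one_of_norm_le (radauIIA_norm_num_le_norm_den hz)
    radauIIA_den_ne_zero_of_num_eq_zero
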